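/- Let n = 2b+1 be odd and let λ = (b, c, d) be a partition of n with exactly three parts satisfying c < b and d ≥ 2 (so b ≥ c ≥ d ≥ 2 and c + d = b + 1). Then |η_λ| ≤ D_{b+1} + b·D_b. -/

import Mathlib

/-!
Renteln's recurrence and the triangle inequality give `|η_λ| ≤ |η_{λ-ĥ}| + h |η_{λ-ĉ}|`, where
`h` is the hook length. Deleting the first column of a two-row shape `(v+q+1, q+1)`, or of a
three-row shape `(u+k+1, w+k+1, k+1)` with `w < u`, multiplies a suitable potential (`|η_λ|`
plus a factorial term that absorbs the `λ-ĥ` contribution) by at most the hook length. Walking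
`(b, c, d)` down its first `d - 1` columns therefore bounds `|η_{(b,c,d)}|` by `(b+2)!/(c+2)!`
times a quantity attached to `(c, c-d+1, 1)`, which is controlled by `2 (D_m + 1) ≤ m!`, while
the target `D_{b+1} + b D_b` is at least `(2b+1) b! / 3` because `m! ≤ 3 D_m`.
-/

/-- Derangement numbers: `D 0 = 1`, `D (m+1) = (m+1) * D m + (-1)^(m+1)`. -/
def derange : ℕ → ℤ
  | 0 => 1
  | n + 1 => (n + 1 : ℤ) * derange n + (-1) ^ (n + 1)

/-- Subtract one from every part and discard the parts that become zero
(deleting the first column of the Ferrers diagram). -/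
def strip (l : List ℕ) : List ℕ := (l.map (· - 1)).filter (fun x => 0 < x)

lemma strip_measure (l : List ℕ) : (strip l).sum + (strip l).length ≤ l.sum := by
  induction l with
  | nil => simp [strip]
  | cons x t ih =>
      simp only [strip, List.map_cons, List.filter_cons] at ih ⊢
      by_cases hx : 0 < x - 1 <;> simp [hx] <;> omega

/-- The eigenvalues of the derangement graph, defined by Renteln's recurrence:
`η ∅ = 1` and `η λ = (-1)^h (η (λ-ĥ) + (-1)^{λ₁} h η (λ-ĉ))`, where
`h = λ₁ + r - 1` is the hook size, `λ-ĥ = strip (tail λ)` removes the hook,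
and `λ-ĉ = strip λ` removes the first column. -/
def eta : List ℕ → ℤ
  | [] => 1
  | a :: t =>
      (-1) ^ (a + t.length) *
        (eta (strip t) + (-1) ^ a * ((a : ℤ) + t.length) * eta (strip (a :: t)))
  termination_by l => l.sum + l.length
  decreasing_by
  · have h1 := strip_measure t
    simp only [List.sum_cons, List.length_cons]
    omega
  · have h1 := strip_measure (a :: t)
    simp only [List.sum_cons, List.length_cons] at h1 ⊢
    omega

/-- `l` is (the list of parts of) a partition of `n`: weakly decreasing,
all parts positive, summing to `n`. -/
def IsPartition (n : ℕ) (l : List ℕ) : Prop :=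
  l.Pairwise (· ≥ ·) ∧ (∀ x ∈ l, 0 < x) ∧ l.sum = n

/-- The hook partition `(a, 1^(n-a))` of `n`. -/
def hookP (n a : ℕ) : List ℕ := a :: List.replicate (n - a) 1

open Nat

theorem derange_succ (m : ℕ) : derange (m + 1) = (m + 1) * derange m + (-1) ^ (m + 1) := rfl

theorem derange_eq_numDerangements (m : ℕ) : derange m = numDerangements m := by
  induction m with
  | zero => rfl
  | succ m ih => rw [derange, numDerangements_succ, ih]; ring

theorem derange_add_two (m : ℕ) :
    derange (m + 2) = (m + 1) * (derange m + derange (m + 1)) := by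
  simp only [derange_eq_numDerangements, numDerangements_add_two]
  push_cast
  ring

theorem numDerangements_le_factorial (m : ℕ) : numDerangements m ≤ m ! := by
  rw [← card_derangements_fin_eq_numDerangements]
  calc Fintype.card (derangements (Fin m)) ≤ Fintype.card (Equiv.Perm (Fin m)) :=
        Fintype.card_subtype_le _
    _ = m ! := by rw [Fintype.card_perm, Fintype.card_fin]

theorem derange_nonneg (m : ℕ) : 0 ≤ derange m := by
  rw [derange_eq_numDerangements]
  positivity

theorem derange_le_factorial (m : ℕ) : derange m ≤ m ! := by
  rw [derange_eq_numDerangements]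
  exact_mod_cast numDerangements_le_factorial m

theorem factorial_le_three_mul_derange {m : ℕ} (hm : 2 ≤ m) : (m ! : ℤ) ≤ 3 * derange m := by
  obtain ⟨m, rfl⟩ := Nat.exists_eq_add_of_le' hm
  clear hm
  induction m using Nat.twoStepInduction with
  | zero => decide
  | one => decide
  | more m ih₀ ih₁ =>
    rw [derange_add_two, factorial_succ, factorial_succ]
    rw [factorial_succ] at ih₁
    push_cast at ih₁ ⊢
    nlinarith

theorem two_mul_derange_add_one_le {m : ℕ} (hm : 3 ≤ m) : 2 * (derange m + 1) ≤ m ! := by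
  obtain ⟨m, rfl⟩ := Nat.exists_eq_add_of_le' hm
  clear hm
  induction m using Nat.twoStepInduction with
  | zero => decide
  | one => decide
  | more m ih₀ ih₁ =>
    rw [derange_add_two, factorial_succ, factorial_succ]
    rw [factorial_succ] at ih₁
    push_cast at ih₁ ⊢
    nlinarith [derange_nonneg (m + 3)]

theorem two_mul_add_one_mul_factorial_le {b : ℕ} (hb : 2 ≤ b) :
    ((2 * b + 1) * b ! : ℤ) ≤ 3 * (derange (b + 1) + b * derange b) := by
  have h₀ := factorial_le_three_mul_derange hb
  have h₁ := factorial_le_three_mul_derange (show 2 ≤ b + 1 by omega)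
  push_cast [factorial_succ] at h₁
  nlinarith [mul_le_mul_of_nonneg_left h₀ (show (0 : ℤ) ≤ b by positivity)]

@[simp] theorem strip_nil : strip [] = [] := rfl

@[simp] theorem strip_cons_one (t : List ℕ) : strip (1 :: t) = strip t := rfl

@[simp] theorem strip_cons_add_two (a : ℕ) (t : List ℕ) :
    strip ((a + 2) :: t) = (a + 1) :: strip t := by
  simp [strip]

@[simp] theorem eta_nil : eta [] = 1 := by rw [eta]

theorem eta_cons (a : ℕ) (t : List ℕ) :
    eta (a :: t) = (-1) ^ (a + t.length) *
      (eta (strip t) + (-1) ^ a * ((a : ℤ) + t.length) * eta (strip (a :: t))) := by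
  rw [eta]

theorem abs_eta_cons_le (a : ℕ) (t : List ℕ) :
    |eta (a :: t)| ≤ |eta (strip t)| + ((a : ℤ) + t.length) * |eta (strip (a :: t))| := by
  have hh : (0 : ℤ) ≤ a + t.length := by positivity
  calc |eta (a :: t)|
      = |eta (strip t) + (-1) ^ a * ((a : ℤ) + t.length) * eta (strip (a :: t))| := by
        rw [eta_cons, abs_mul, abs_neg_one_pow, one_mul]
    _ ≤ _ := by
        refine (abs_add_le _ _).trans_eq ?_
        rw [abs_mul, abs_mul, abs_neg_one_pow, one_mul, abs_of_nonneg hh]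

theorem eta_singleton (m : ℕ) : eta [m] = derange m := by
  induction m using Nat.twoStepInduction with
  | zero => simp [eta_cons, strip, derange]
  | one => simp [eta_cons, strip, derange]
  | more m _ ih =>
    have hs : ((-1 : ℤ) ^ (m + 2)) * (-1) ^ (m + 2) = 1 := by rw [← mul_pow]; norm_num
    rw [eta_cons, strip_cons_add_two, strip_nil, ih, derange_succ (m + 1)]
    push_cast
    simp only [List.length_nil, add_zero, eta_nil]
    linear_combination ((m + 2) * derange (m + 1)) * hs

theorem eta_succ_one (v : ℕ) : eta [v + 1, 1] = -(derange (v + 1) + derange v) := by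
  rcases v with _ | v
  · simp [eta_cons, strip, derange]
  · have hs : ((-1 : ℤ) ^ (v + 2)) * (-1) ^ (v + 2) = 1 := by rw [← mul_pow]; norm_num
    rw [eta_cons, strip_cons_add_two, strip_cons_one, strip_nil, eta_singleton,
      derange_succ (v + 1)]
    push_cast
    simp only [List.length_cons, List.length_nil, eta_nil]
    rw [show v + 1 + 1 + (0 + 1) = v + 2 + 1 by omega, pow_succ]
    push_cast
    linear_combination (-(v + 3 : ℤ) * derange (v + 1)) * hs

theorem factorial_mul_le_of_succ_le_mul {f : ℕ → ℤ} {m : ℕ}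
    (hf : ∀ k, f (k + 1) ≤ (m + k + 1) * f k) (k : ℕ) :
    (m ! : ℤ) * f k ≤ (m + k)! * f 0 := by
  induction k with
  | zero => rfl
  | succ k ih =>
    calc (m ! : ℤ) * f (k + 1) ≤ m ! * ((m + k + 1) * f k) :=
          mul_le_mul_of_nonneg_left (hf k) (by positivity)
      _ = (m + k + 1) * (m ! * f k) := by ring
      _ ≤ (m + k + 1) * ((m + k)! * f 0) := mul_le_mul_of_nonneg_left ih (by positivity)
      _ = (m + (k + 1))! * f 0 := by rw [← add_assoc, factorial_succ]; push_cast; ring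

-- The summand `(q + 1)!` pays for the term `|η_{λ-ĥ}| = D_{q+1}` of the next column.
def twoRowPotential (v q : ℕ) : ℤ := (v + 1) * |eta [v + q + 1, q + 1]| + (q + 1)!

theorem twoRowPotential_zero (v : ℕ) : twoRowPotential v 0 = derange (v + 2) + 1 := by
  rw [twoRowPotential, add_zero, zero_add, eta_succ_one, abs_neg,
    abs_of_nonneg (add_nonneg (derange_nonneg _) (derange_nonneg _)), derange_add_two,
    factorial_one]
  push_cast
  ring

theorem twoRowPotential_succ_le (v q : ℕ) :
    twoRowPotential v (q + 1) ≤ (v + q + 3) * twoRowPotential v q := by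
  have h := abs_eta_cons_le (v + q + 2) [q + 2]
  simp only [strip_cons_add_two, strip_nil, eta_singleton, List.length_cons, List.length_nil] at h
  have hD := derange_le_factorial (q + 1)
  rw [abs_of_nonneg (derange_nonneg _)] at h
  unfold twoRowPotential
  rw [show v + (q + 1) + 1 = v + q + 2 by omega, factorial_succ (q + 1)]
  push_cast at h ⊢
  nlinarith [mul_le_mul_of_nonneg_left h (show (0 : ℤ) ≤ v + 1 by positivity)]

theorem factorial_mul_twoRowPotential_le (v q : ℕ) :
    ((v + 2)! : ℤ) * twoRowPotential v q ≤ (v + q + 2)! * (derange (v + 2) + 1) := by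
  rw [← twoRowPotential_zero, show v + q + 2 = v + 2 + q by omega]
  refine factorial_mul_le_of_succ_le_mul (fun k => ?_) q
  have := twoRowPotential_succ_le v k
  push_cast
  linarith

-- The factorial summand pays for the two-row term `|η_{λ-ĥ}|`; this needs `w < u`.
def threeRowPotential (u w k : ℕ) : ℤ :=
  2 * (w + 1) * (w + 2)! * |eta [u + k + 1, w + k + 1, k + 1]| +
    (w + k + 2)! * (derange (w + 2) + 1)

theorem threeRowPotential_succ_le {u w : ℕ} (hwu : w < u) (k : ℕ) :
    threeRowPotential u w (k + 1) ≤ (u + k + 4) * threeRowPotential u w k := by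
  have h := abs_eta_cons_le (u + k + 2) [w + k + 2, k + 2]
  simp only [strip_cons_add_two, strip_nil, List.length_cons, List.length_nil] at h
  have h2 := factorial_mul_twoRowPotential_le w k
  unfold twoRowPotential at h2
  unfold threeRowPotential
  rw [show u + (k + 1) + 1 = u + k + 2 by omega, show w + (k + 1) + 1 = w + k + 2 by omega,
    show w + (k + 1) + 2 = (w + k + 2) + 1 by omega, factorial_succ (w + k + 2)]
  have hK : (0 : ℤ) ≤ ((w + k + 2)! : ℤ) * (derange (w + 2) + 1) := by
    have := derange_nonneg (w + 2)
    positivity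
  have hA : (0 : ℤ) ≤ 2 * (w + 1) * (w + 2)! := by positivity
  have huw : (w : ℤ) + 1 ≤ u := by exact_mod_cast hwu
  push_cast at h h2 ⊢
  nlinarith [mul_le_mul_of_nonneg_left h hA, mul_le_mul_of_nonneg_right huw hK]

theorem factorial_mul_threeRowPotential_le {u w : ℕ} (hwu : w < u) (k : ℕ) :
    ((u + 3)! : ℤ) * threeRowPotential u w k ≤ (u + k + 3)! * threeRowPotential u w 0 := by
  rw [show u + k + 3 = u + 3 + k by omega]
  refine factorial_mul_le_of_succ_le_mul (fun j => ?_) k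
  have := threeRowPotential_succ_le hwu j
  push_cast
  linarith

theorem abs_eta_succ_succ_one_one_le (k : ℕ) :
    |eta [k + 2, 1, 1]| ≤ 1 + (k + 4) * derange (k + 1) := by
  have h := abs_eta_cons_le (k + 2) [1, 1]
  simp only [strip_cons_add_two, strip_cons_one, strip_nil, eta_nil, eta_singleton,
    List.length_cons, List.length_nil, abs_one, abs_of_nonneg (derange_nonneg _)] at h
  push_cast at h
  linarith

theorem abs_eta_bcc_le (k : ℕ) :
    |eta [2 * k + 3, k + 2, k + 2]| ≤
      derange (2 * k + 4) + (2 * k + 3) * derange (2 * k + 3) := by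
  set G := |eta [2 * k + 3, k + 2, k + 2]|
  have hG : ((k + 4)! : ℤ) * G ≤ (2 * k + 5)! * (2 + (k + 4) * derange (k + 1)) := by
    have h := factorial_mul_threeRowPotential_le (u := k + 1) (w := 0) (by omega) (k + 1)
    simp only [threeRowPotential, show derange 2 = 1 from rfl, zero_add, add_zero,
      Nat.cast_zero] at h
    rw [show k + 1 + 3 = k + 4 by ring, show k + 1 + (k + 1) + 1 = 2 * k + 3 by ring,
      show k + 1 + 1 = k + 2 by ring, show k + 1 + 2 = k + 3 by ring,
      show k + 1 + (k + 1) + 3 = 2 * k + 5 by ring] at h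
    norm_num at h
    have hF := mul_le_mul_of_nonneg_left (abs_eta_succ_succ_one_one_le k)
      (show (0 : ℤ) ≤ (2 * k + 5)! by positivity)
    have : (0 : ℤ) ≤ (k + 4)! * (k + 3)! := by positivity
    nlinarith
  have hT := two_mul_add_one_mul_factorial_le (show 2 ≤ 2 * k + 3 by omega)
  rw [show 2 * k + 3 + 1 = 2 * k + 4 by ring] at hT
  push_cast at hT
  -- `2 (D_{k+1} + 1) ≤ (k+1)!` needs `k ≥ 2`; the shapes `(3,2,2)` and `(5,3,3)` are computed.
  rcases (show k = 0 ∨ k = 1 ∨ 2 ≤ k by omega) with rfl | rfl | hk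
  · norm_num [factorial, derange] at hG ⊢
    linarith
  · norm_num [factorial, derange] at hG ⊢
    linarith
  · have hD := two_mul_derange_add_one_le (show 3 ≤ k + 1 by omega)
    have e₁ : ((k + 4)! : ℤ) = (k + 4) * (k + 3) * (k + 2) * (k + 1)! := by
      push_cast [factorial_succ]; ring
    have e₂ : ((2 * k + 5)! : ℤ) = (2 * k + 5) * (2 * k + 4) * (2 * k + 3)! := by
      push_cast [show 2 * k + 5 = 2 * k + 3 + 1 + 1 by ring, factorial_succ]; ring
    rw [e₁, e₂] at hG
    have hB : (0 : ℤ) ≤ (2 * k + 3)! := by positivity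
    have hG' : (k + 3) * G ≤ (2 * k + 5) * (2 * k + 3)! := by
      refine le_of_mul_le_mul_left ?_
        (show (0 : ℤ) < 2 * (k + 4) * (k + 2) * (k + 1)! by positivity)
      nlinarith [mul_le_mul_of_nonneg_left hD
        (show (0 : ℤ) ≤ (2 * k + 5) * (2 * k + 4) * (k + 4) * (2 * k + 3)! by positivity),
        mul_nonneg (show (0 : ℤ) ≤ k by positivity) hB]
    nlinarith [mul_nonneg (show (0 : ℤ) ≤ k by positivity) hB]

theorem two_mul_abs_eta_three_row_one_le (w k : ℕ) :
    2 * (k + 2) * |eta [w + k + 3, w + 2, 1]| ≤ (w + k + 5) * (w + k + 3)! := by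
  have h := abs_eta_cons_le (w + k + 1 + 2) [w + 2, 1]
  simp only [strip_cons_add_two, strip_cons_one, strip_nil, eta_singleton,
    List.length_cons, List.length_nil, abs_of_nonneg (derange_nonneg _)] at h
  have h2 := factorial_mul_twoRowPotential_le (k + 1) w
  unfold twoRowPotential at h2
  rw [show w + k + 1 + 2 = w + k + 3 by ring, show w + k + 1 + 1 = w + k + 2 by ring] at h
  rw [show k + 1 + w + 1 = w + k + 2 by ring, show k + 1 + w + 2 = w + k + 3 by ring,
    show k + 1 + 2 = k + 3 by ring] at h2
  set E := |eta [w + k + 2, w + 1]|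
  have hD₁ := derange_le_factorial (w + 1)
  have hD₂ := two_mul_derange_add_one_le (show 3 ≤ k + 3 by omega)
  have hE : 2 * ((k + 2) * E + (w + 1)!) ≤ (w + k + 3)! := by
    refine le_of_mul_le_mul_left ?_ (show (0 : ℤ) < (k + 3)! by positivity)
    push_cast at h2
    nlinarith [mul_le_mul_of_nonneg_left hD₂ (show (0 : ℤ) ≤ (w + k + 3)! by positivity)]
  push_cast at h ⊢
  nlinarith [mul_le_mul_of_nonneg_left h (show (0 : ℤ) ≤ 2 * (k + 2) by positivity),
    mul_le_mul_of_nonneg_left hD₁ (show (0 : ℤ) ≤ 2 * (k + 2) by positivity),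
    mul_nonneg (show (0 : ℤ) ≤ w + 3 by positivity) (show (0 : ℤ) ≤ (w + 1)! by positivity)]

theorem abs_eta_bcd_le_of_lt (w k : ℕ) :
    |eta [w + 2 * k + 4, w + k + 3, k + 2]| ≤
      derange (w + 2 * k + 5) + (w + 2 * k + 4) * derange (w + 2 * k + 4) := by
  have hpoly :
      3 * ((w + 2 * k + 6) * (w + 2 * k + 5) * (2 * (w + 2) * (w + k + 5) + k + 2) : ℤ) ≤
      4 * (k + 2) * (w + 2) * (w + k + 5) * (w + k + 4) * (2 * (w + 2 * k + 4) + 1) := by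
    rw [← sub_nonneg]
    ring_nf
    positivity
  set G := |eta [w + 2 * k + 4, w + k + 3, k + 2]|
  set F := |eta [w + k + 3, w + 2, 1]|
  have h := factorial_mul_threeRowPotential_le (u := w + k + 2) (w := w + 1) (by omega) (k + 1)
  simp only [threeRowPotential, add_zero, zero_add] at h
  rw [show w + k + 2 + 3 = w + k + 5 by ring, show w + k + 2 + (k + 1) + 1 = w + 2 * k + 4 by ring,
    show w + 1 + (k + 1) + 1 = w + k + 3 by ring, show k + 1 + 1 = k + 2 by ring,
    show w + 1 + (k + 1) + 2 = w + k + 4 by ring, show w + 1 + 2 = w + 3 by ring,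
    show w + k + 2 + (k + 1) + 3 = w + 2 * k + 6 by ring, show w + k + 2 + 1 = w + k + 3 by ring,
    show w + 1 + 1 = w + 2 by ring] at h
  have hF := two_mul_abs_eta_three_row_one_le w k
  have hK : 2 * (derange (w + 3) + 1) ≤ (w + k + 3)! :=
    (two_mul_derange_add_one_le (show 3 ≤ w + 3 by omega)).trans
      (by exact_mod_cast factorial_le (by omega))
  have hT := two_mul_add_one_mul_factorial_le (show 2 ≤ w + 2 * k + 4 by omega)
  rw [show w + 2 * k + 4 + 1 = w + 2 * k + 5 by ring] at hT
  have hD := derange_nonneg (w + 3)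
  have hG₁ : 2 * (w + 2) * (w + k + 5)! * G ≤
      (w + 2 * k + 6)! * (2 * (w + 2) * F + derange (w + 3) + 1) := by
    refine le_of_mul_le_mul_left ?_ (show (0 : ℤ) < (w + 3)! by positivity)
    push_cast at h
    nlinarith [mul_nonneg (show (0 : ℤ) ≤ (w + k + 5)! * (w + k + 4)! by positivity)
      (show (0 : ℤ) ≤ derange (w + 3) + 1 by linarith)]
  have hG₂ : 4 * (k + 2) * (w + 2) * (w + k + 5)! * G ≤
      (w + 2 * k + 6)! * (w + k + 3)! * (2 * (w + 2) * (w + k + 5) + k + 2) := by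
    nlinarith [mul_le_mul_of_nonneg_left hF
        (show (0 : ℤ) ≤ 2 * (w + 2) * (w + 2 * k + 6)! by positivity),
      mul_le_mul_of_nonneg_left hK (show (0 : ℤ) ≤ (k + 2) * (w + 2 * k + 6)! by positivity)]
  have hG₃ : 4 * (k + 2) * (w + 2) * (w + k + 5) * (w + k + 4) * G ≤
      (w + 2 * k + 6)! * (2 * (w + 2) * (w + k + 5) + k + 2) := by
    refine le_of_mul_le_mul_left ?_ (show (0 : ℤ) < (w + k + 3)! by positivity)
    have e : ((w + k + 5)! : ℤ) = (w + k + 5) * (w + k + 4) * (w + k + 3)! := by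
      push_cast [show w + k + 5 = w + k + 3 + 1 + 1 by ring, factorial_succ]; ring
    rw [e] at hG₂
    linarith
  have e : ((w + 2 * k + 6)! : ℤ) = (w + 2 * k + 6) * (w + 2 * k + 5) * (w + 2 * k + 4)! := by
    push_cast [show w + 2 * k + 6 = w + 2 * k + 4 + 1 + 1 by ring, factorial_succ]; ring
  rw [e] at hG₃
  refine le_of_mul_le_mul_left ?_
    (show (0 : ℤ) < 3 * (4 * (k + 2) * (w + 2) * (w + k + 5) * (w + k + 4)) by positivity)
  push_cast at hT
  nlinarith [mul_le_mul_of_nonneg_right hpoly (show (0 : ℤ) ≤ (w + 2 * k + 4)! by positivity),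
    mul_le_mul_of_nonneg_left hT
      (show (0 : ℤ) ≤ 4 * (k + 2) * (w + 2) * (w + k + 5) * (w + k + 4) by positivity)]

theorem eta_abs_bcd_upper_general (n b c d : ℕ) (hn : n = 2 * b + 1)
    (hdc : d ≤ c) (hd : 2 ≤ d) (hsum : b + c + d = n) :
    |eta [b, c, d]| ≤ derange (b + 1) + (b : ℤ) * derange b := by
  obtain ⟨k, rfl⟩ : ∃ k, d = k + 2 := ⟨d - 2, by omega⟩
  rcases hdc.eq_or_lt with rfl | hlt
  · obtain rfl : b = 2 * k + 3 := by omega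
    simpa using abs_eta_bcc_le k
  · obtain ⟨w, rfl⟩ : ∃ w, c = w + k + 3 := ⟨c - (k + 3), by omega⟩
    obtain rfl : b = w + 2 * k + 4 := by omega
    simpa using abs_eta_bcd_le_of_lt w k

/-- For odd `n = 2b+1` and a three-part partition `(b, c, d)` of `n` with `c < b` and
`d ≥ 2`: `|η_{(b,c,d)}| ≤ D_{b+1} + b D_b`. -/
theorem eta_abs_bcd_upper (n b c d : ℕ) (hn : n = 2 * b + 1)
    (hcb : c < b) (hdc : d ≤ c) (hd : 2 ≤ d) (hsum : b + c + d = n) :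
    |eta [b, c, d]| ≤ derange (b + 1) + (b : ℤ) * derange b :=
  eta_abs_bcd_upper_general n b c d hn hdc hd hsum
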